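/- The AND gate, i.e. the 2×4 matrix A with A|x⟩⊗|y⟩ = |x·y⟩ for x, y ∈ {0,1} (explicitly A = [[1,1,1,0],[0,0,0,1]]), belongs to the Clifford+Triangle fragment. -/
import Mathlib


noncomputable section

/-- Matrices of size `2^m × 2^n`, indexed by bit strings. -/
abbrev QMat (m n : ℕ) := Matrix (Fin m → Fin 2) (Fin n → Fin 2) ℂ

/-- The Hadamard matrix `(1/√2)[[1,1],[1,-1]]` as a `2×2` generator. -/
def hadM : QMat 1 1 :=
  fun x y => if x 0 = 1 ∧ y 0 = 1 then -((Real.sqrt 2 : ℝ) : ℂ)⁻¹ else ((Real.sqrt 2 : ℝ) : ℂ)⁻¹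

/-- The triangle matrix `[[1,1],[0,1]]` as a `2×2` generator. -/
def triM : QMat 1 1 :=
  fun x y => if x 0 = 1 ∧ y 0 = 0 then 0 else 1

/-- The swap matrix on `ℂ²⊗ℂ²`. -/
def swapM : QMat 2 2 :=
  fun x y => if x 0 = y 1 ∧ x 1 = y 0 then 1 else 0

/-- The Z-spider `Z_k^{m,n} = |0⟩^{⊗m}⟨0|^{⊗n} + i^k |1⟩^{⊗m}⟨1|^{⊗n}`
(phase an integer multiple of π/2). -/
def zSpider (k : ℤ) (m n : ℕ) : QMat m n :=
  fun x y =>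
    (if (∀ i, x i = 0) ∧ (∀ j, y j = 0) then 1 else 0) +
      Complex.I ^ k * (if (∀ i, x i = 1) ∧ (∀ j, y j = 1) then 1 else 0)

/-- Kronecker (tensor) product of matrices on qubit registers. -/
def kronM {m n p q : ℕ} (A : QMat m n) (B : QMat p q) : QMat (m + p) (n + q) :=
  fun x y =>
    A (fun i => x (Fin.castAdd p i)) (fun j => y (Fin.castAdd q j)) *
      B (fun i => x (Fin.natAdd m i)) (fun j => y (Fin.natAdd n j))

/-- The Clifford+Triangle fragment: the smallest family of matrices containing the
Hadamard matrix, the triangle matrix, the swap matrix and all Z-spiders with phases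
integer multiples of π/2, closed under composition and Kronecker product. -/
inductive CliffordTriangle : {m n : ℕ} → QMat m n → Prop
  | had : CliffordTriangle hadM
  | tri : CliffordTriangle triM
  | swap : CliffordTriangle swapM
  | zspider (k : ℤ) (m n : ℕ) : CliffordTriangle (zSpider k m n)
  | mul {m n p : ℕ} {A : QMat m n} {B : QMat n p} :
      CliffordTriangle A → CliffordTriangle B → CliffordTriangle (A * B)
  | kron {m n p q : ℕ} {A : QMat m n} {B : QMat p q} :
      CliffordTriangle A → CliffordTriangle B → CliffordTriangle (kronM A B)

/-- The AND gate: the `2×4` matrix with `A(|x⟩⊗|y⟩) = |x·y⟩` for `x, y ∈ {0,1}`. -/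
def andGate : QMat 1 2 :=
  fun x y => if (x 0 = 1 ↔ (y 0 = 1 ∧ y 1 = 1)) then 1 else 0

lemma sum_pi1 (f : (Fin 1 → Fin 2) → ℂ) :
    ∑ x : Fin 1 → Fin 2, f x = f (fun _ => 0) + f (fun _ => 1) := by
  rw [← (Equiv.funUnique (Fin 1) (Fin 2)).symm.sum_comp, Fin.sum_univ_two]
  rfl

lemma sum_pi2 (f : (Fin 2 → Fin 2) → ℂ) :
    ∑ x : Fin 2 → Fin 2, f x =
      f ![0,0] + f ![0,1] + f ![1,0] + f ![1,1] := by
  rw [← (finTwoArrowEquiv (Fin 2)).symm.sum_comp, Fintype.sum_prod_type]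
  simp only [Fin.sum_univ_two, finTwoArrowEquiv, piFinTwoEquiv, Equiv.coe_fn_symm_mk]
  ring

lemma castAdd_aux : Fin.castAdd 1 (0 : Fin 1) = (0 : Fin 2) := rfl
lemma natAdd_aux : Fin.natAdd 1 (0 : Fin 1) = (1 : Fin 2) := rfl

lemma fin2cases (a : Fin 2) : a = 0 ∨ a = 1 := by omega

lemma andGate_eq :
    andGate = zSpider 2 1 1 * triM * zSpider 2 1 2 * kronM triM triM := by
  ext x y
  have hx : x = fun _ => x 0 := funext fun i => by rw [Subsingleton.elim i 0]
  have hy : y = ![y 0, y 1] := by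
    funext i; fin_cases i <;> rfl
  rw [hx, hy]
  rcases fin2cases (x 0) with h0 | h0 <;>
    rcases fin2cases (y 0) with h1 | h1 <;>
    rcases fin2cases (y 1) with h2 | h2 <;>
    rw [h0, h1, h2] <;>
    simp [Matrix.mul_apply, sum_pi1, sum_pi2, andGate, zSpider, triM, kronM,
      Fin.forall_fin_one, Fin.forall_fin_two, Matrix.cons_val_zero,
      Matrix.cons_val_one, Fin.isValue, zpow_ofNat, castAdd_aux, natAdd_aux]

/-- The AND gate belongs to the Clifford+Triangle fragment. -/
theorem andGate_mem_cliffordTriangle : CliffordTriangle andGate := by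
  rw [andGate_eq]
  exact .mul (.mul (.mul (.zspider 2 1 1) .tri) (.zspider 2 1 2)) (.kron .tri .tri)

end
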